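/- Let $B$ be a ring and $r \in \mathbb{N}$, with $L, J_n \subseteq B[p_1,\dots,p_r]$ as usual ($L$ generated by $p_1,\dots,p_r$; $J_n$ generated by $s_j$ for $j \geq n$, where $s_0=1$, $s_j=0$ for $j<0$, $s_j=-\sum_{i=1}^r p_i s_{j-i}$ for $j>0$). Then for each $n \in \mathbb{Z}$ there exists $k \in \mathbb{N}$ such that $L^k \subseteq J_n$. -/

import Mathlib

open scoped Pointwise

noncomputable section

/-- The (possibly noncommutative) polynomial ring `B[p₁,…,p_r]` over a ring `B`,
with `r` central variables, realized as the monoid algebra of `Fin r →₀ ℕ`. -/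
abbrev NCPoly (B : Type*) [Ring B] (r : ℕ) := AddMonoidAlgebra B (Fin r →₀ ℕ)

/-- The variable `p_{i+1}` of `B[p₁,…,p_r]`. -/
noncomputable def pvar (B : Type*) [Ring B] (r : ℕ) (i : Fin r) : NCPoly B r :=
  AddMonoidAlgebra.single (Finsupp.single i 1) (1 : B)

/-- The two-sided ideal `J_d` generated by the `s j` with `j ≥ d`. -/
noncomputable def Jideal (B : Type*) [Ring B] (r : ℕ) (s : ℤ → NCPoly B r) (d : ℤ) :
    TwoSidedIdeal (NCPoly B r) :=
  TwoSidedIdeal.span {x | ∃ j : ℤ, d ≤ j ∧ x = s j}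

/-- The two-sided ideal `L` generated by the variables `p₁,…,p_r`. -/
noncomputable def Lideal (B : Type*) [Ring B] (r : ℕ) : TwoSidedIdeal (NCPoly B r) :=
  TwoSidedIdeal.span (Set.range (pvar B r))

/-- Product of two two-sided ideals: the two-sided ideal generated by products. -/
noncomputable def imul {R : Type*} [Ring R] (I J : TwoSidedIdeal R) : TwoSidedIdeal R :=
  TwoSidedIdeal.span ((I : Set R) * (J : Set R))

/-- Powers of a two-sided ideal (`I ^ 0` is the unit ideal). -/
noncomputable def ipow {R : Type*} [Ring R] (I : TwoSidedIdeal R) : ℕ → TwoSidedIdeal R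
  | 0 => ⊤
  | n + 1 => imul (ipow I n) I

/-!
Modulo `J_n` the power series `∑ s_j t^j`, the inverse of `1 + ∑ p_i t^(i+1)`, becomes a
polynomial, so `1 + ∑ p_i t^(i+1)` is a unit in `(B[p] ⧸ J_n)[t]`. Over a commutative ring this
forces the coefficients `p_i` to be nilpotent, and finitely many nilpotent generators generate a
nilpotent ideal. All `p_i` and `s_j` are central, so the argument runs in the commutative centre
of `B[p]`, whose ideals generate two-sided ideals of `B[p]` compatibly with products.
-/

open Polynomial

/-- `s` is the coefficient sequence of the power series inverse of `1 + ∑ p_i t^(i+1)`. -/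
structure IsReciprocalSeq {R : Type*} [Ring R] {r : ℕ} (p : Fin r → R) (s : ℤ → R) : Prop where
  zero : s 0 = 1
  neg : ∀ j : ℤ, j < 0 → s j = 0
  pos : ∀ j : ℤ, 0 < j → s j = -∑ i : Fin r, p i * s (j - ((i : ℕ) + 1))

namespace IsReciprocalSeq

variable {R : Type*} [Ring R] {r : ℕ} {p : Fin r → R} {s : ℤ → R}

theorem map {S : Type*} [Ring S] (h : IsReciprocalSeq p s) (f : R →+* S) :
    IsReciprocalSeq (f ∘ p) (f ∘ s) where
  zero := by simp [h.zero]
  neg j hj := by simp [h.neg j hj]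
  pos j hj := by simp [h.pos j hj]

theorem mem_center (h : IsReciprocalSeq p s) (hp : ∀ i, p i ∈ Subring.center R) (j : ℤ) :
    s j ∈ Subring.center R := by
  obtain ⟨m, hm⟩ : ∃ m : ℕ, j < m := ⟨j.toNat + 1, by omega⟩
  induction m generalizing j with
  | zero => rw [h.neg j (by omega)]; exact zero_mem _
  | succ m ih =>
    rcases lt_trichotomy j 0 with hj | rfl | hj
    · rw [h.neg j hj]; exact zero_mem _
    · rw [h.zero]; exact one_mem _
    · rw [h.pos j hj]
      exact neg_mem (sum_mem fun i _ => mul_mem (hp i) (ih _ (by omega)))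

variable {A : Type*} [CommRing A] {x : Fin r → A} {σ : ℤ → A}

theorem mul_eq_one (h : IsReciprocalSeq x σ) {n : ℕ} (hσn : ∀ j : ℤ, n ≤ j → σ j = 0) :
    (1 + ∑ i : Fin r, C (x i) * X ^ ((i : ℕ) + 1)) *
      ∑ j ∈ Finset.range n, monomial j (σ j) = 1 := by
  set F : A[X] := ∑ j ∈ Finset.range n, monomial j (σ j)
  have hF : ∀ m : ℕ, F.coeff m = σ m := by
    intro m
    simp only [F, finsetSum_coeff, coeff_monomial, Finset.sum_ite_eq', Finset.mem_range]
    split_ifs with hm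
    · rfl
    · exact (hσn m (by omega)).symm
  have hshift : ∀ (i : Fin r) (d : ℕ),
      (X ^ ((i : ℕ) + 1) * F).coeff d = σ ((d : ℤ) - ((i : ℕ) + 1)) := by
    intro i d
    rw [coeff_X_pow_mul']
    split_ifs with hid
    · rw [hF]; push_cast [hid]; rfl
    · exact (h.neg _ (by omega)).symm
  ext d
  simp only [add_mul, one_mul, Finset.sum_mul, mul_assoc, coeff_add, finsetSum_coeff,
    coeff_C_mul, hshift, hF, coeff_one]
  rcases Nat.eq_zero_or_pos d with rfl | hd
  · rw [Finset.sum_eq_zero fun i _ => by rw [h.neg _ (by omega), mul_zero]]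
    simp [h.zero]
  · rw [h.pos d (by exact_mod_cast hd), if_neg hd.ne']
    ring

theorem isNilpotent (h : IsReciprocalSeq x σ) {n : ℕ} (hσn : ∀ j : ℤ, n ≤ j → σ j = 0)
    (i : Fin r) : IsNilpotent (x i) := by
  have hunit := IsUnit.of_mul_eq_one _ (h.mul_eq_one hσn)
  have hcoeff : (1 + ∑ i : Fin r, C (x i) * X ^ ((i : ℕ) + 1)).coeff ((i : ℕ) + 1) = x i := by
    simp [coeff_one, Fin.val_inj]
  simpa [hcoeff] using
    (isUnit_iff_coeff_isUnit_isNilpotent.mp hunit).2 ((i : ℕ) + 1) (Nat.succ_ne_zero _)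

theorem exists_pow_span_le (h : IsReciprocalSeq x σ) (n : ℤ) :
    ∃ k : ℕ, Ideal.span (Set.range x) ^ k ≤ Ideal.span {y | ∃ j : ℤ, n ≤ j ∧ y = σ j} := by
  set I := Ideal.span {y | ∃ j : ℤ, n ≤ j ∧ y = σ j}
  have hnil : ∀ i, IsNilpotent (Ideal.Quotient.mk I (x i)) :=
    (h.map (Ideal.Quotient.mk I)).isNilpotent (n := n.toNat) fun j hj =>
      Ideal.Quotient.eq_zero_iff_mem.mpr (Ideal.subset_span ⟨j, by omega, rfl⟩)
  refine Ideal.exists_pow_le_of_le_radical_of_fg ?_ (Submodule.fg_span (Set.finite_range x))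
  rw [Ideal.span_le]
  rintro _ ⟨i, rfl⟩
  obtain ⟨m, hm⟩ := hnil i
  exact ⟨m, Ideal.Quotient.eq_zero_iff_mem.mp (by rwa [map_pow])⟩

end IsReciprocalSeq

section CentralImage

variable {A R : Type*} [CommRing A] [Ring R] (f : A →+* R)

theorem image_span_subset_span_image (S : Set A) :
    f '' Ideal.span S ⊆ TwoSidedIdeal.span (f '' S) := by
  set T := TwoSidedIdeal.span (f '' S)
  rintro _ ⟨a, ha, rfl⟩
  induction ha using Submodule.span_induction with
  | mem a ha => exact TwoSidedIdeal.subset_span ⟨a, ha, rfl⟩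
  | zero => simp
  | add a b _ _ ha hb => simpa using T.add_mem ha hb
  | smul c a _ ha => simpa using T.mul_mem_left (f c) _ ha

variable {f}

theorem mul_mem_span_image_mul (hf : ∀ a y, f a * y = y * f a) {I J : Ideal A} {a b : R}
    (ha : a ∈ TwoSidedIdeal.span (f '' I)) (hb : b ∈ TwoSidedIdeal.span (f '' J)) :
    a * b ∈ TwoSidedIdeal.span (f '' ↑(I * J)) := by
  set T := TwoSidedIdeal.span (f '' ↑(I * J))
  induction ha using TwoSidedIdeal.span_induction generalizing b with
  | mem _ hu =>
    obtain ⟨u, hu, rfl⟩ := hu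
    induction hb using TwoSidedIdeal.span_induction with
    | mem _ hv =>
      obtain ⟨v, hv, rfl⟩ := hv
      exact TwoSidedIdeal.subset_span ⟨u * v, Ideal.mul_mem_mul hu hv, map_mul f u v⟩
    | zero => simp
    | add _ _ _ _ h₁ h₂ => simpa [mul_add] using T.add_mem h₁ h₂
    | neg _ _ h => simpa using T.neg_mem h
    | left_absorb c b _ h =>
      rw [← mul_assoc, hf, mul_assoc]
      exact T.mul_mem_left c _ h
    | right_absorb c b _ h => simpa [mul_assoc] using T.mul_mem_right _ c h
  | zero => simp
  | add _ _ _ _ h₁ h₂ => simpa [add_mul] using T.add_mem (h₁ hb) (h₂ hb)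
  | neg _ _ h => simpa using T.neg_mem (h hb)
  | left_absorb c a _ h => simpa [mul_assoc] using T.mul_mem_left c _ (h hb)
  | right_absorb c a _ h => simpa [mul_assoc] using h (TwoSidedIdeal.mul_mem_left _ c _ hb)

theorem ipow_le_span_image_pow (hf : ∀ a y, f a * y = y * f a) {T : TwoSidedIdeal R}
    {I : Ideal A} (hT : T ≤ TwoSidedIdeal.span (f '' I)) (k : ℕ) :
    ipow T k ≤ TwoSidedIdeal.span (f '' ↑(I ^ k)) := by
  induction k with
  | zero =>
    have h1 : (1 : R) ∈ TwoSidedIdeal.span (f '' ↑(I ^ 0)) :=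
      TwoSidedIdeal.subset_span ⟨1, by simp, map_one f⟩
    intro y _
    simpa using TwoSidedIdeal.mul_mem_left _ y 1 h1
  | succ k ih =>
    rw [ipow, imul, TwoSidedIdeal.span_le, pow_succ]
    rintro _ ⟨a, ha, b, hb, rfl⟩
    exact mul_mem_span_image_mul hf (ih ha) (hT hb)

end CentralImage

theorem pvar_mem_center (B : Type*) [Ring B] (r : ℕ) (i : Fin r) :
    pvar B r i ∈ Subring.center (NCPoly B r) :=
  Subring.mem_center_iff.mpr fun g =>
    (AddMonoidAlgebra.single_commute (fun _ => AddCommute.all _ _) Commute.one_left g).eq.symm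

/-- For each `n` there exists `k` such that `L^k ⊆ J_n`. -/
theorem statement7 (B : Type*) [Ring B] (r : ℕ)
    (s : ℤ → NCPoly B r) (hs0 : s 0 = 1) (hsneg : ∀ j : ℤ, j < 0 → s j = 0)
    (hsrec : ∀ j : ℤ, 0 < j → s j = -∑ i : Fin r, pvar B r i * s (j - ((i : ℕ) + 1)))
    (n : ℤ) :
    ∃ k : ℕ, ipow (Lideal B r) k ≤ Jideal B r s n := by
  set C := Subring.center (NCPoly B r)
  have hrecip : IsReciprocalSeq (pvar B r) s := ⟨hs0, hsneg, hsrec⟩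
  have hs : ∀ j, s j ∈ C := hrecip.mem_center (pvar_mem_center B r)
  let x : Fin r → C := fun i => ⟨pvar B r i, pvar_mem_center B r i⟩
  let σ : ℤ → C := fun j => ⟨s j, hs j⟩
  have hrecipC : IsReciprocalSeq x σ :=
    ⟨Subtype.ext hs0, fun j hj => Subtype.ext (hsneg j hj),
      fun j hj => Subtype.ext (by simpa [x, σ] using hsrec j hj)⟩
  obtain ⟨k, hk⟩ := hrecipC.exists_pow_span_le n
  have hf : ∀ a y, C.subtype a * y = y * C.subtype a :=
    fun a y => (Subring.mem_center_iff.mp a.2 y).symm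
  have hL : Lideal B r ≤ TwoSidedIdeal.span (C.subtype '' Ideal.span (Set.range x)) :=
    TwoSidedIdeal.span_mono (by rintro _ ⟨i, rfl⟩; exact ⟨x i, Ideal.subset_span ⟨i, rfl⟩, rfl⟩)
  refine ⟨k, (ipow_le_span_image_pow hf hL k).trans (TwoSidedIdeal.span_le.mpr ?_)⟩
  refine (Set.image_mono hk).trans ((image_span_subset_span_image _ _).trans ?_)
  refine TwoSidedIdeal.span_mono ?_
  rintro _ ⟨_, ⟨j, hj, rfl⟩, rfl⟩
  exact ⟨j, hj, rfl⟩
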